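/- arXiv:1907.12703 — 6 statements merged into one kernel-verified Lean document; each statement's English description precedes it below -/
import Mathlib

section
/- Let W be a 2×2 real weight matrix supported on (−1,1) and suppose the hypergeometric operator 𝔇 = ∂ₓ²(1−x²)I + ∂ₓ(A₁₁x + A₁₀) + A₀ (A₁₁, A₁₀, A₀ ∈ M₂(ℝ)) is W-symmetric. Then, with B(0) = (∫₋₁¹ x W(x)dx)(∫₋₁¹ W(x)dx)⁻¹, the first-order constant coefficient satisfies A₁₀ = B(0)A₀ − A₀B(0) − A₁₁B(0). -/
open MeasureTheory Matrix Set

set_option maxRecDepth 4000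

noncomputable section

abbrev Mat2 := Matrix (Fin 2) (Fin 2) ℝ

/-- A 2×2 real matrix-valued polynomial function: every entry is a polynomial. -/
def IsMatPoly (P : ℝ → Mat2) : Prop :=
  ∀ i j, ∃ p : Polynomial ℝ, ∀ x, P x i j = p.eval x

/-- A 2×2 real weight matrix supported on (−1,1). -/
structure IsWeight2 (W : ℝ → Mat2) : Prop where
  smooth : ∀ i j, ContDiffOn ℝ (⊤ : ℕ∞) (fun x => W x i j) (Ioo (-1) 1)
  posdef : ∀ x ∈ Ioo (-1:ℝ) 1, (W x).PosDef
  zero : ∀ x, x ∉ Ioo (-1:ℝ) 1 → W x = 0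
  moments : ∀ (n : ℕ) (i j : Fin 2), Integrable (fun x : ℝ => |x| ^ n * |W x i j|)

/-- Entrywise integral of a matrix-valued function. -/
def matInt (F : ℝ → Mat2) : Mat2 := Matrix.of fun i j => ∫ x : ℝ, F x i j

/-- The matrix-valued inner product ⟨P,Q⟩_W = ∫ P W Qᵀ. -/
def ip (W P Q : ℝ → Mat2) : Mat2 := matInt fun x => P x * W x * (Q x)ᵀ

/-- Entrywise derivative of a matrix-valued function. -/
def mDeriv (P : ℝ → Mat2) : ℝ → Mat2 :=
  fun x => Matrix.of fun i j => deriv (fun t => P t i j) x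

/-- Right action of the operator 𝔇 = ∂ₓ²a₂(x)I + ∂ₓ(A₁₁x + A₁₀) + A₀:
P·𝔇 = P''(x)a₂(x) + P'(x)(A₁₁x + A₁₀) + P(x)A₀. -/
def opAct (a₂ : ℝ → ℝ) (A₁₁ A₁₀ A₀ : Mat2) (P : ℝ → Mat2) : ℝ → Mat2 :=
  fun x => a₂ x • mDeriv (mDeriv P) x + mDeriv P x * (x • A₁₁ + A₁₀) + P x * A₀

/-- `𝔇` is `W`-symmetric: ⟨P·𝔇,Q⟩_W = ⟨P,Q·𝔇⟩_W for all matrix polynomials. -/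
def WSymm (W : ℝ → Mat2) (a₂ : ℝ → ℝ) (A₁₁ A₁₀ A₀ : Mat2) : Prop :=
  ∀ P Q : ℝ → Mat2, IsMatPoly P → IsMatPoly Q →
    ip W (opAct a₂ A₁₁ A₁₀ A₀ P) Q = ip W P (opAct a₂ A₁₁ A₁₀ A₀ Q)

/- ------------------ auxiliary lemmas ------------------ -/

lemma matInt_apply (F : ℝ → Mat2) (i j : Fin 2) : matInt F i j = ∫ x : ℝ, F x i j := rfl

lemma W_aesm {W : ℝ → Mat2} (hW : IsWeight2 W) (i j : Fin 2) :
    AEStronglyMeasurable (fun x => W x i j) volume := by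
  have h1 : (fun x => W x i j) = (Ioo (-1:ℝ) 1).indicator (fun x => W x i j) := by
    funext x
    by_cases hx : x ∈ Ioo (-1:ℝ) 1
    · simp [Set.indicator_of_mem hx]
    · simp [Set.indicator_of_notMem hx, hW.zero x hx]
  rw [h1]
  exact (aestronglyMeasurable_indicator_iff measurableSet_Ioo).mpr
    (((hW.smooth i j).continuousOn).aestronglyMeasurable measurableSet_Ioo)

lemma W_int {W : ℝ → Mat2} (hW : IsWeight2 W) (n : ℕ) (i j : Fin 2) :
    Integrable (fun x => x ^ n * W x i j) := by
  refine (hW.moments n i j).mono' ?_ ?_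
  · exact ((continuous_pow n).aestronglyMeasurable).mul (W_aesm hW i j)
  · filter_upwards with x
    rw [Real.norm_eq_abs, abs_mul, abs_pow]

lemma W_int0 {W : ℝ → Mat2} (hW : IsWeight2 W) (i j : Fin 2) :
    Integrable (fun x => W x i j) := by
  simpa using W_int hW 0 i j

lemma W_int1 {W : ℝ → Mat2} (hW : IsWeight2 W) (i j : Fin 2) :
    Integrable (fun x => x * W x i j) := by
  simpa using W_int hW 1 i j

lemma matInt_add {F G : ℝ → Mat2} (hF : ∀ i j, Integrable fun x => F x i j)
    (hG : ∀ i j, Integrable fun x => G x i j) :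
    matInt (fun x => F x + G x) = matInt F + matInt G := by
  ext i j
  simp only [matInt, Matrix.of_apply, Matrix.add_apply]
  exact integral_add (hF i j) (hG i j)

lemma matInt_const_mul {F : ℝ → Mat2} (C : Mat2)
    (hF : ∀ i j, Integrable fun x => F x i j) :
    matInt (fun x => C * F x) = C * matInt F := by
  ext i j
  simp only [matInt, Matrix.of_apply, Matrix.mul_apply]
  rw [integral_finset_sum _ (fun k _ => (hF k j).const_mul (C i k))]
  exact Finset.sum_congr rfl fun k _ => integral_const_mul _ _

lemma matInt_mul_const {F : ℝ → Mat2} (C : Mat2)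
    (hF : ∀ i j, Integrable fun x => F x i j) :
    matInt (fun x => F x * C) = matInt F * C := by
  ext i j
  simp only [matInt, Matrix.of_apply, Matrix.mul_apply]
  rw [integral_finset_sum _ (fun k _ => (hF i k).mul_const (C k j))]
  exact Finset.sum_congr rfl fun k _ => integral_mul_const _ _

lemma int_const_mul {F : ℝ → Mat2} (C : Mat2)
    (hF : ∀ i j, Integrable fun x => F x i j) :
    ∀ i j, Integrable fun x => (C * F x) i j := by
  intro i j
  simp only [Matrix.mul_apply]
  exact integrable_finset_sum _ fun k _ => (hF k j).const_mul _

/-- If the hypergeometric operator 𝔇 is W-symmetric, then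
A₁₀ = B(0)A₀ − A₀B(0) − A₁₁B(0) where B(0) = (∫xW)(∫W)⁻¹. -/
theorem A10_formula
    (W : ℝ → Mat2) (A₁₁ A₁₀ A₀ : Mat2)
    (hW : IsWeight2 W)
    (hsymm : WSymm W (fun x => 1 - x ^ 2) A₁₁ A₁₀ A₀) :
    let B0 : Mat2 := matInt (fun x => x • W x) * (matInt W)⁻¹
    A₁₀ = B0 * A₀ - A₀ * B0 - A₁₁ * B0 := by
  intro B0
  -- integrability
  have hint0 : ∀ i j, Integrable fun x => W x i j := W_int0 hW
  have hint1 : ∀ i j, Integrable fun x => (x • W x) i j := by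
    intro i j
    simpa [Matrix.smul_apply, smul_eq_mul] using W_int1 hW i j
  set M0 : Mat2 := matInt W with hM0def
  set M1 : Mat2 := matInt (fun x => x • W x) with hM1def
  -- polynomials
  have hQ1 : IsMatPoly (fun _ : ℝ => (1 : Mat2)) :=
    fun i j => ⟨Polynomial.C ((1:Mat2) i j), fun x => by simp⟩
  have hPx : IsMatPoly (fun x : ℝ => x • (1 : Mat2)) :=
    fun i j => ⟨Polynomial.C ((1:Mat2) i j) * Polynomial.X,
      fun x => by simp only [Matrix.smul_apply, smul_eq_mul, Polynomial.eval_mul,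
        Polynomial.eval_C, Polynomial.eval_X]; ring⟩
  -- derivatives
  have hd0 : mDeriv (fun _ : ℝ => (0 : Mat2)) = fun _ => 0 := by
    funext x; ext i j; simp [mDeriv]
  have hd1 : mDeriv (fun _ : ℝ => (1 : Mat2)) = fun _ => 0 := by
    funext x; ext i j; simp [mDeriv]
  have hdx : mDeriv (fun x : ℝ => x • (1 : Mat2)) = fun _ => (1 : Mat2) := by
    funext x; ext i j
    simp only [mDeriv, Matrix.of_apply, Matrix.smul_apply, smul_eq_mul]
    rw [deriv_mul_const differentiableAt_fun_id, deriv_id'', one_mul]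
  have hdd : mDeriv (mDeriv (fun x : ℝ => x • (1 : Mat2))) = fun _ => 0 := by
    rw [hdx]; funext x; ext i j; simp [mDeriv]
  -- operator actions
  have hopQ1 : opAct (fun x => 1 - x ^ 2) A₁₁ A₁₀ A₀ (fun _ => (1:Mat2)) = fun _ => A₀ := by
    funext x
    simp [opAct, hd1, hd0]
  have hopPx : opAct (fun x => 1 - x ^ 2) A₁₁ A₁₀ A₀ (fun x => x • (1:Mat2))
      = fun x => x • (A₁₁ + A₀) + A₁₀ := by
    funext x
    simp only [opAct]
    rw [hdd, hdx]
    simp only [smul_zero, zero_add, Matrix.one_mul, Matrix.smul_mul, smul_add]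
    abel
  -- first symmetry relation : A₀ M₀ = M₀ A₀ᵀ
  have E1 : A₀ * M0 = M0 * A₀ᵀ := by
    have h := hsymm (fun _ => (1:Mat2)) (fun _ => (1:Mat2)) hQ1 hQ1
    have l1 : ip W (opAct (fun x => 1 - x ^ 2) A₁₁ A₁₀ A₀ (fun _ => (1:Mat2))) (fun _ => (1:Mat2))
        = A₀ * M0 := by
      rw [ip]
      have heq : (fun x => opAct (fun x => 1 - x ^ 2) A₁₁ A₁₀ A₀ (fun _ => (1:Mat2)) x * W x
          * ((fun _ => (1:Mat2)) x)ᵀ) = fun x => A₀ * W x := by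
        funext x; rw [hopQ1]; simp
      rw [heq, matInt_const_mul A₀ hint0, hM0def]
    have l2 : ip W (fun _ => (1:Mat2)) (opAct (fun x => 1 - x ^ 2) A₁₁ A₁₀ A₀ (fun _ => (1:Mat2)))
        = M0 * A₀ᵀ := by
      rw [ip]
      have heq : (fun x => (1:Mat2) * W x
          * ((opAct (fun x => 1 - x ^ 2) A₁₁ A₁₀ A₀ (fun _ => (1:Mat2))) x)ᵀ)
          = fun x => W x * A₀ᵀ := by
        funext x; rw [hopQ1]; simp
      rw [heq, matInt_mul_const A₀ᵀ hint0, hM0def]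
    rw [l1, l2] at h
    exact h
  -- second symmetry relation : (A₁₁+A₀) M₁ + A₁₀ M₀ = M₁ A₀ᵀ
  have E2 : (A₁₁ + A₀) * M1 + A₁₀ * M0 = M1 * A₀ᵀ := by
    have h := hsymm (fun x => x • (1:Mat2)) (fun _ => (1:Mat2)) hPx hQ1
    have l1 : ip W (opAct (fun x => 1 - x ^ 2) A₁₁ A₁₀ A₀ (fun x => x • (1:Mat2))) (fun _ => (1:Mat2))
        = (A₁₁ + A₀) * M1 + A₁₀ * M0 := by
      rw [ip]
      have heq : (fun x => opAct (fun x => 1 - x ^ 2) A₁₁ A₁₀ A₀ (fun x => x • (1:Mat2)) x * W x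
          * ((fun _ => (1:Mat2)) x)ᵀ)
          = fun x => (A₁₁ + A₀) * (x • W x) + A₁₀ * W x := by
        funext x; rw [hopPx]
        simp [Matrix.add_mul, Matrix.smul_mul, Matrix.mul_smul]
      rw [heq, matInt_add (int_const_mul _ hint1) (int_const_mul _ hint0),
        matInt_const_mul _ hint1, matInt_const_mul _ hint0, hM0def, hM1def]
    have l2 : ip W (fun x => x • (1:Mat2)) (opAct (fun x => 1 - x ^ 2) A₁₁ A₁₀ A₀ (fun _ => (1:Mat2)))
        = M1 * A₀ᵀ := by
      rw [ip]
      have heq : (fun x => (x • (1:Mat2)) * W x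
          * ((opAct (fun x => 1 - x ^ 2) A₁₁ A₁₀ A₀ (fun _ => (1:Mat2))) x)ᵀ)
          = fun x => (x • W x) * A₀ᵀ := by
        funext x; rw [hopQ1]; simp [Matrix.smul_mul]
      rw [heq, matInt_mul_const A₀ᵀ hint1, hM1def]
    rw [l1, l2] at h
    exact h
  -- M₀ is positive definite hence invertible
  have hposdef : M0.PosDef := by
    refine Matrix.PosDef.of_dotProduct_mulVec_pos ?_ ?_
    · -- Hermitian
      ext i j
      simp only [Matrix.conjTranspose_apply, star_trivial, hM0def, matInt_apply]
      refine integral_congr_ae (Filter.Eventually.of_forall fun x => ?_)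
      by_cases hx : x ∈ Ioo (-1:ℝ) 1
      · have := (hW.posdef x hx).1.apply i j
        simpa using this
      · simp [hW.zero x hx]
    · intro v hv
      set g : ℝ → ℝ := fun x => ∑ i, ∑ j, v i * W x i j * v j with hgdef
      have hgeq : ∀ x, g x = star v ⬝ᵥ (W x) *ᵥ v := by
        intro x
        simp [hgdef, dotProduct, Matrix.mulVec, Finset.mul_sum, mul_assoc, mul_add,
          Fin.sum_univ_two]
      have hgint : Integrable g :=
        integrable_finset_sum _ fun i _ =>
          integrable_finset_sum _ fun j _ => ((hint0 i j).const_mul (v i)).mul_const (v j)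
      have hgnn : 0 ≤ g := by
        intro x
        by_cases hx : x ∈ Ioo (-1:ℝ) 1
        · rw [hgeq]; exact le_of_lt ((hW.posdef x hx).dotProduct_mulVec_pos hv)
        · rw [hgeq]; simp [hW.zero x hx]
      have hsupp : Ioo (-1:ℝ) 1 ⊆ Function.support g := by
        intro x hx
        have : 0 < g x := by rw [hgeq]; exact (hW.posdef x hx).dotProduct_mulVec_pos hv
        exact this.ne'
      have hpos : 0 < ∫ x, g x := by
        rw [integral_pos_iff_support_of_nonneg hgnn hgint]
        refine lt_of_lt_of_le ?_ (measure_mono hsupp)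
        rw [Real.volume_Ioo]
        norm_num
      have key : star v ⬝ᵥ (M0 *ᵥ v) = ∫ x, g x := by
        have h1 : ∫ x, g x = ∑ i, ∑ j, v i * (∫ x, W x i j) * v j := by
          rw [hgdef, integral_finset_sum _ (fun i _ =>
            integrable_finset_sum _ fun j _ => ((hint0 i j).const_mul (v i)).mul_const (v j))]
          refine Finset.sum_congr rfl fun i _ => ?_
          rw [integral_finset_sum _ (fun j _ => ((hint0 i j).const_mul (v i)).mul_const (v j))]
          refine Finset.sum_congr rfl fun j _ => ?_
          rw [integral_mul_const, integral_const_mul]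
        rw [h1]
        simp [dotProduct, Matrix.mulVec, Finset.mul_sum, hM0def, matInt_apply, mul_assoc,
          mul_add, Fin.sum_univ_two]
      rw [key]
      exact hpos
  have hdet : IsUnit M0.det := hposdef.det_pos.ne'.isUnit
  have hMM : M0 * M0⁻¹ = 1 := Matrix.mul_nonsing_inv _ hdet
  have hMM' : M0⁻¹ * M0 = 1 := Matrix.nonsing_inv_mul _ hdet
  have hA0t : A₀ᵀ = M0⁻¹ * (A₀ * M0) := by
    rw [E1, ← mul_assoc, hMM', Matrix.one_mul]
  have hE2' : A₁₀ * M0 = M1 * A₀ᵀ - (A₁₁ + A₀) * M1 := eq_sub_of_add_eq' E2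
  show A₁₀ = M1 * M0⁻¹ * A₀ - A₀ * (M1 * M0⁻¹) - A₁₁ * (M1 * M0⁻¹)
  have step1 : M1 * A₀ᵀ * M0⁻¹ = M1 * M0⁻¹ * A₀ := by
    rw [hA0t]
    simp only [← Matrix.mul_assoc]
    rw [Matrix.mul_assoc (M1 * M0⁻¹ * A₀) M0 M0⁻¹, hMM, Matrix.mul_one]
  calc A₁₀ = A₁₀ * (M0 * M0⁻¹) := by rw [hMM, Matrix.mul_one]
    _ = (A₁₀ * M0) * M0⁻¹ := by rw [Matrix.mul_assoc]
    _ = (M1 * A₀ᵀ - (A₁₁ + A₀) * M1) * M0⁻¹ := by rw [hE2']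
    _ = M1 * A₀ᵀ * M0⁻¹ - (A₁₁ + A₀) * M1 * M0⁻¹ := by rw [Matrix.sub_mul]
    _ = M1 * M0⁻¹ * A₀ - A₀ * (M1 * M0⁻¹) - A₁₁ * (M1 * M0⁻¹) := by
        rw [step1]
        simp only [Matrix.add_mul, Matrix.mul_assoc]
        abel

end
end

section
/- Let k ≥ 1, H₁, H₀ ∈ M_k(ℝ), and set H(t) = tH₁ + H₀ for t ∈ ℝ. Let ℓ ∈ ℤ, let a₂₁ ∈ ℝ, σ ∈ ℝᵏ, and suppose H(m) is nonsingular for every integer m ≥ ℓ. If the sequence of vectors b(n) ∈ ℝᵏ (n ≥ ℓ) satisfies H(n+2)b(n+1) = H(n)b(n) − 2a₂₁σ for all n ≥ ℓ, then for every n ≥ ℓ, b(n) = H(n)⁻¹H(ℓ)H(n+1)⁻¹[ H(ℓ+1)b(ℓ) − 2a₂₁(n−ℓ)·H((n+ℓ+1)/2)·H(ℓ)⁻¹σ ], where H((n+ℓ+1)/2) = ((n+ℓ+1)/2)H₁ + H₀. -/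
/-! With `A = H(ℓ)⁻¹`, the products `H(s) A H(t)` of the pencil are symmetric in `s` and `t`.
Multiplying the recurrence by `H(n+1) A` therefore turns it into a telescoping one for
`c(n) = H(n+1) A H(n) b(n)`: `c(n+1) = c(n) - 2a₂₁ H(n+1) A σ`. Summing the affine
function `j ↦ H(j)` over `j ∈ (ℓ, n]` gives `(n - ℓ) H((n+ℓ+1)/2)`, and `c(ℓ) = H(ℓ+1) b(ℓ)`;
inverting `H(n+1) A H(n)` yields the closed form. -/

open Matrix

noncomputable section

section AffineFamily

variable {K M : Type*} [AddCommGroup M] {H₁ H₀ : M} {H : K → M}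

theorem eq_add_sub_smul_of_affine [CommRing K] [Module K M] (hH : ∀ t, H t = t • H₁ + H₀)
    (s u : K) : H s = H u + (s - u) • H₁ := by
  rw [hH, hH]
  module

/-- Inductive step of `∑ j ∈ (y, x], H j = (x - y) • H ((x + y + 1) / 2)`. -/
theorem sub_smul_midpoint_add_of_affine [Field K] [NeZero (2 : K)] [Module K M]
    (hH : ∀ t, H t = t • H₁ + H₀) (x y : K) :
    (x - y) • H ((x + y + 1) / 2) + H (x + 1) = (x + 1 - y) • H ((x + 1 + y + 1) / 2) := by
  rw [hH, hH, hH]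
  match_scalars <;> field_simp <;> ring

end AffineFamily

namespace Matrix

variable {ι K : Type*} [Fintype ι] [DecidableEq ι] {H₁ H₀ : Matrix ι ι K}
  {H : K → Matrix ι ι K}

/-- Both sides equal `H u + (s + t - 2u) • H₁ + ((s - u) * (t - u)) • (H₁ * (H u)⁻¹ * H₁)`. -/
theorem pencil_mul_inv_mul_comm [CommRing K] (hH : ∀ t, H t = t • H₁ + H₀) {u : K}
    (hu : IsUnit (H u)) (s t : K) : H s * (H u)⁻¹ * H t = H t * (H u)⁻¹ * H s := by
  have hdet : IsUnit (H u).det := (isUnit_iff_isUnit_det _).mp hu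
  rw [eq_add_sub_smul_of_affine hH s u, eq_add_sub_smul_of_affine hH t u]
  simp only [Matrix.add_mul, Matrix.mul_add, Matrix.smul_mul, Matrix.mul_smul,
    mul_nonsing_inv _ hdet, nonsing_inv_mul _ hdet, Matrix.one_mul, Matrix.mul_one,
    Matrix.mul_assoc]
  module

theorem pencil_recurrence_invariant [Field K] [NeZero (2 : K)] (hH : ∀ t, H t = t • H₁ + H₀)
    {ℓ : ℤ} (hℓ : IsUnit (H ℓ)) (a : K) (σ : ι → K) (b : ℤ → ι → K)
    (hrec : ∀ n : ℤ, ℓ ≤ n → H (n + 2) *ᵥ b (n + 1) = H n *ᵥ b n - a • σ) {n : ℤ}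
    (hn : ℓ ≤ n) :
    (H (n + 1) * (H ℓ)⁻¹ * H n) *ᵥ b n =
      H (ℓ + 1) *ᵥ b ℓ - (a * (n - ℓ)) • ((H ((n + ℓ + 1) / 2) * (H ℓ)⁻¹) *ᵥ σ) := by
  induction n, hn using Int.leInduction with
  | base =>
    rw [Matrix.mul_assoc, nonsing_inv_mul _ ((isUnit_iff_isUnit_det _).mp hℓ)]
    simp
  | succ n hn ih =>
    have step : (H (n + 2) * (H ℓ)⁻¹ * H (n + 1)) *ᵥ b (n + 1) =
        (H (n + 1) * (H ℓ)⁻¹ * H n) *ᵥ b n - a • ((H (n + 1) * (H ℓ)⁻¹) *ᵥ σ) := by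
      rw [pencil_mul_inv_mul_comm hH hℓ, ← mulVec_mulVec, hrec n hn, mulVec_sub, mulVec_smul,
        mulVec_mulVec]
    have midpoint := congrArg (· *ᵥ σ) (congrArg (· * (H ℓ)⁻¹)
      (sub_smul_midpoint_add_of_affine hH (n : K) ℓ))
    simp only [Matrix.add_mul, Matrix.smul_mul, add_mulVec, smul_mulVec] at midpoint
    push_cast
    rw [add_assoc, one_add_one_eq_two, step, ih, mul_smul a ((n : K) + 1 - ℓ), ← midpoint,
      smul_add, smul_smul, sub_sub]

end Matrix

theorem b_closed_form_general
    (k : ℕ) (H₁ H₀ : Matrix (Fin k) (Fin k) ℝ) (ℓ : ℤ) (a₂₁ : ℝ)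
    (σ : Fin k → ℝ)
    (H : ℝ → Matrix (Fin k) (Fin k) ℝ) (hH : ∀ t : ℝ, H t = t • H₁ + H₀)
    (hns : ∀ m : ℤ, ℓ ≤ m → IsUnit (H (m : ℝ)))
    (b : ℤ → Fin k → ℝ)
    (hrec : ∀ n : ℤ, ℓ ≤ n →
      (H ((n : ℝ) + 2)) *ᵥ b (n + 1) = (H (n : ℝ)) *ᵥ b n - (2 * a₂₁) • σ) :
    ∀ n : ℤ, ℓ ≤ n →
      b n = ((H (n : ℝ))⁻¹ * H (ℓ : ℝ) * (H ((n : ℝ) + 1))⁻¹) *ᵥ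
        ((H ((ℓ : ℝ) + 1)) *ᵥ b ℓ -
          (2 * a₂₁ * ((n : ℝ) - (ℓ : ℝ))) •
            ((H (((n : ℝ) + (ℓ : ℝ) + 1) / 2) * (H (ℓ : ℝ))⁻¹) *ᵥ σ)) := by
  intro n hn
  have hℓ : IsUnit (H ℓ) := hns ℓ le_rfl
  have hsucc : IsUnit (H (n + 1)) := by exact_mod_cast hns (n + 1) (by omega)
  set M := H (n + 1) * (H ℓ)⁻¹ * H n
  have hM : IsUnit M := (hsucc.mul (isUnit_nonsing_inv_iff.mpr hℓ)).mul (hns n hn)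
  have hM_inv : M⁻¹ = (H n)⁻¹ * H ℓ * (H (n + 1))⁻¹ := by
    simp only [M, Matrix.mul_inv_rev, Matrix.mul_assoc,
      nonsing_inv_nonsing_inv _ ((isUnit_iff_isUnit_det _).mp hℓ)]
  rw [← hM_inv, ← pencil_recurrence_invariant hH hℓ _ σ b hrec hn, mulVec_mulVec,
    nonsing_inv_mul _ ((isUnit_iff_isUnit_det _).mp hM), one_mulVec]

/-- Closed-form solution of the linear update recursion
H(n+2)b(n+1) = H(n)b(n) − 2a₂₁σ. -/
theorem b_closed_form
    (k : ℕ) (hk : 1 ≤ k) (H₁ H₀ : Matrix (Fin k) (Fin k) ℝ) (ℓ : ℤ) (a₂₁ : ℝ)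
    (σ : Fin k → ℝ)
    (H : ℝ → Matrix (Fin k) (Fin k) ℝ) (hH : ∀ t : ℝ, H t = t • H₁ + H₀)
    (hns : ∀ m : ℤ, ℓ ≤ m → IsUnit (H (m : ℝ)))
    (b : ℤ → Fin k → ℝ)
    (hrec : ∀ n : ℤ, ℓ ≤ n →
      (H ((n : ℝ) + 2)) *ᵥ b (n + 1) = (H (n : ℝ)) *ᵥ b n - (2 * a₂₁) • σ) :
    ∀ n : ℤ, ℓ ≤ n →
      b n = ((H (n : ℝ))⁻¹ * H (ℓ : ℝ) * (H ((n : ℝ) + 1))⁻¹) *ᵥ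
        ((H ((ℓ : ℝ) + 1)) *ᵥ b ℓ -
          (2 * a₂₁ * ((n : ℝ) - (ℓ : ℝ))) •
            ((H (((n : ℝ) + (ℓ : ℝ) + 1) / 2) * (H (ℓ : ℝ))⁻¹) *ᵥ σ)) :=
  b_closed_form_general k H₁ H₀ ℓ a₂₁ σ H hH hns b hrec

end
end

section
/- Let k ≥ 1, H₁, H₀ ∈ M_k(ℝ), H(t) = tH₁ + H₀, let ℓ ∈ ℤ, a₂₁ ∈ ℝ, σ ∈ ℝᵏ, and suppose H(m) is nonsingular for every integer m ≥ ℓ. If b(n) ∈ ℝᵏ (n ≥ ℓ) satisfies H(n+2)b(n+1) = H(n)b(n) − 2a₂₁σ for all n ≥ ℓ, then each entry of b(n) is a rational function of n for n ≥ ℓ: there exist polynomials p₁,…,p_k, q ∈ ℝ[t] with q(n) ≠ 0 for all integers n ≥ ℓ such that b(n)_i = p_i(n)/q(n) for all integers n ≥ ℓ and all i. -/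
open Matrix

noncomputable section

/-- The entries of the solution of the B(n)-update recursion are rational functions of n. -/
theorem b_is_rational
    (k : ℕ) (hk : 1 ≤ k) (H₁ H₀ : Matrix (Fin k) (Fin k) ℝ) (ℓ : ℤ) (a₂₁ : ℝ)
    (σ : Fin k → ℝ)
    (H : ℝ → Matrix (Fin k) (Fin k) ℝ) (hH : ∀ t : ℝ, H t = t • H₁ + H₀)
    (hns : ∀ m : ℤ, ℓ ≤ m → IsUnit (H (m : ℝ)))
    (b : ℤ → Fin k → ℝ)
    (hrec : ∀ n : ℤ, ℓ ≤ n →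
      (H ((n : ℝ) + 2)) *ᵥ b (n + 1) = (H (n : ℝ)) *ᵥ b n - (2 * a₂₁) • σ) :
    ∃ (p : Fin k → Polynomial ℝ) (q : Polynomial ℝ),
      (∀ n : ℤ, ℓ ≤ n → q.eval (n : ℝ) ≠ 0) ∧
      ∀ n : ℤ, ℓ ≤ n → ∀ i : Fin k, b n i = (p i).eval (n : ℝ) / q.eval (n : ℝ) := by
  -- determinants of H at integer points are nonzero
  have hdet : ∀ m : ℤ, ℓ ≤ m → (H (m : ℝ)).det ≠ 0 := fun m hm =>
    ((Matrix.isUnit_iff_isUnit_det _).mp (hns m hm)).ne_zero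
  -- the inverse of H(ℓ+1)
  have hl1 : ((ℓ + 1 : ℤ) : ℝ) = (ℓ : ℝ) + 1 := by push_cast; ring
  have hA : IsUnit (H ((ℓ : ℝ) + 1)).det := by
    rw [← hl1]; exact (Matrix.isUnit_iff_isUnit_det _).mp (hns (ℓ + 1) (by omega))
  set G₁ : Matrix (Fin k) (Fin k) ℝ := H₁ * (H ((ℓ : ℝ) + 1))⁻¹ with hG₁
  have key : G₁ * H ((ℓ : ℝ) + 1) = H₁ := by
    rw [hG₁, Matrix.mul_assoc, Matrix.nonsing_inv_mul _ hA, Matrix.mul_one]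
  have key' : G₁ * (((ℓ : ℝ) + 1) • H₁ + H₀) = H₁ := by rw [← hH]; exact key
  -- the polynomial matrix G
  set G : ℝ → Matrix (Fin k) (Fin k) ℝ := fun t => 1 + (t - (ℓ : ℝ)) • G₁ with hG
  -- the fundamental identity
  have funG : ∀ t : ℝ, G (t + 1) * H (t + 1) = G t * H (t + 2) := by
    intro t
    rw [hG, hH (t + 1), hH (t + 2)]
    show (1 + (t + 1 - (ℓ : ℝ)) • G₁) * ((t + 1) • H₁ + H₀)
        = (1 + (t - (ℓ : ℝ)) • G₁) * ((t + 2) • H₁ + H₀)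
    have hdiff : (1 + (t + 1 - (ℓ : ℝ)) • G₁) * ((t + 1) • H₁ + H₀)
        - (1 + (t - (ℓ : ℝ)) • G₁) * ((t + 2) • H₁ + H₀)
        = G₁ * (((ℓ : ℝ) + 1) • H₁ + H₀) - H₁ := by
      simp only [Matrix.add_mul, Matrix.one_mul, Matrix.smul_mul, Matrix.mul_add,
        mul_smul_comm, smul_smul]
      module
    rw [key'] at hdiff
    simp only [sub_self] at hdiff
    exact sub_eq_zero.mp hdiff
  -- z n is the key auxiliary sequence
  set c : Fin k → ℝ := (2 * a₂₁) • σ with hc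
  set z : ℤ → Fin k → ℝ := fun n => (G (n : ℝ) * H (n : ℝ)) *ᵥ b n with hz
  set w : Fin k → ℝ := G₁ *ᵥ c with hw
  have hstep : ∀ n : ℤ, ℓ ≤ n →
      z (n + 1) = z n - (c + ((n : ℝ) - (ℓ : ℝ)) • w) := by
    intro n hn
    have hcast : ((n + 1 : ℤ) : ℝ) = (n : ℝ) + 1 := by push_cast; ring
    calc z (n + 1) = (G ((n : ℝ) + 1) * H ((n : ℝ) + 1)) *ᵥ b (n + 1) := by
          rw [hz]; simp only [hcast]
      _ = (G (n : ℝ) * H ((n : ℝ) + 2)) *ᵥ b (n + 1) := by rw [funG]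
      _ = G (n : ℝ) *ᵥ (H ((n : ℝ) + 2) *ᵥ b (n + 1)) := (Matrix.mulVec_mulVec _ _ _).symm
      _ = G (n : ℝ) *ᵥ (H (n : ℝ) *ᵥ b n - c) := by rw [hrec n hn]
      _ = G (n : ℝ) *ᵥ (H (n : ℝ) *ᵥ b n) - G (n : ℝ) *ᵥ c := Matrix.mulVec_sub _ _ _
      _ = z n - (c + ((n : ℝ) - (ℓ : ℝ)) • w) := by
          rw [hz, Matrix.mulVec_mulVec, hG, hw]
          congr 1
          simp [Matrix.add_mulVec, Matrix.smul_mulVec, Matrix.one_mulVec]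
  -- closed form for z
  have hclosed : ∀ n : ℤ, ℓ ≤ n → z n = fun i =>
      z ℓ i - ((n : ℝ) - (ℓ : ℝ)) * c i
        - (((n : ℝ) - (ℓ : ℝ)) * ((n : ℝ) - (ℓ : ℝ) - 1) / 2) * w i := by
    refine Int.le_induction ?_ ?_
    · funext i
      simp only [sub_self, zero_mul, mul_zero, zero_div, sub_zero]
    · intro n hn ih
      rw [hstep n hn, ih]
      funext i
      have hcast : ((n + 1 : ℤ) : ℝ) = (n : ℝ) + 1 := by push_cast; ring
      simp only [Pi.sub_apply, Pi.add_apply, Pi.smul_apply, smul_eq_mul, hcast]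
      ring
  -- det G n ≠ 0 for n ≥ ℓ
  have hGdet : ∀ n : ℤ, ℓ ≤ n → (G (n : ℝ)).det ≠ 0 := by
    refine Int.le_induction ?_ ?_
    · have hGl : G (ℓ : ℝ) = 1 := by rw [hG]; simp
      rw [hGl]; simp
    · intro n hn ih
      have hdeteq : (G ((n : ℝ) + 1)).det * (H ((n : ℝ) + 1)).det
          = (G (n : ℝ)).det * (H ((n : ℝ) + 2)).det := by
        rw [← Matrix.det_mul, ← Matrix.det_mul, funG]
      have hc1 : ((n + 1 : ℤ) : ℝ) = (n : ℝ) + 1 := by push_cast; ring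
      have hc2 : ((n + 2 : ℤ) : ℝ) = (n : ℝ) + 2 := by push_cast; ring
      have hd2 : (H ((n : ℝ) + 2)).det ≠ 0 := by rw [← hc2]; exact hdet (n + 2) (by omega)
      have hne : (G (n : ℝ)).det * (H ((n : ℝ) + 2)).det ≠ 0 := mul_ne_zero ih hd2
      rw [← hdeteq] at hne
      rw [hc1]
      exact left_ne_zero_of_mul hne
  -- polynomial matrices
  set HP : Matrix (Fin k) (Fin k) (Polynomial ℝ) :=
    fun i j => Polynomial.C (H₁ i j) * Polynomial.X + Polynomial.C (H₀ i j) with hHP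
  set GP : Matrix (Fin k) (Fin k) (Polynomial ℝ) :=
    fun i j => Polynomial.C ((1 : Matrix (Fin k) (Fin k) ℝ) i j)
      + (Polynomial.X - Polynomial.C (ℓ : ℝ)) * Polynomial.C (G₁ i j) with hGP
  have hHPeval : ∀ x : ℝ, HP.map (Polynomial.eval x) = H x := by
    intro x; ext i j
    rw [hH]
    simp only [hHP, Matrix.map, Matrix.of_apply, Matrix.map_apply, Polynomial.eval_add, Polynomial.eval_mul,
      Polynomial.eval_C, Polynomial.eval_X, Matrix.add_apply, Matrix.smul_apply,
      smul_eq_mul]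
    ring
  have hGPeval : ∀ x : ℝ, GP.map (Polynomial.eval x) = G x := by
    intro x; ext i j
    rw [hG]
    simp only [hGP, Matrix.map, Matrix.of_apply, Matrix.map_apply, Polynomial.eval_add, Polynomial.eval_mul,
      Polynomial.eval_sub, Polynomial.eval_C, Polynomial.eval_X, Matrix.add_apply,
      Matrix.smul_apply, smul_eq_mul]
  set PP : Matrix (Fin k) (Fin k) (Polynomial ℝ) := GP * HP with hPP
  have hPPeval : ∀ x : ℝ,
      ((Polynomial.evalRingHom x).mapMatrix PP : Matrix (Fin k) (Fin k) ℝ)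
      = G x * H x := by
    intro x
    rw [hPP, _root_.map_mul]
    have e1 : ((Polynomial.evalRingHom x).mapMatrix GP : Matrix (Fin k) (Fin k) ℝ)
        = GP.map (Polynomial.eval x) := rfl
    have e2 : ((Polynomial.evalRingHom x).mapMatrix HP : Matrix (Fin k) (Fin k) ℝ)
        = HP.map (Polynomial.eval x) := rfl
    rw [e1, e2, hHPeval, hGPeval]
  -- Z as polynomials
  set ZP : Fin k → Polynomial ℝ := fun i =>
    Polynomial.C (z ℓ i) - (Polynomial.X - Polynomial.C (ℓ : ℝ)) * Polynomial.C (c i)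
      - Polynomial.C (2⁻¹ : ℝ) * ((Polynomial.X - Polynomial.C (ℓ : ℝ))
          * (Polynomial.X - Polynomial.C ((ℓ : ℝ) + 1))) * Polynomial.C (w i) with hZP
  have hZPeval : ∀ n : ℤ, ℓ ≤ n → ∀ i, (ZP i).eval (n : ℝ) = z n i := by
    intro n hn i
    rw [hclosed n hn]
    simp only [hZP, Polynomial.eval_sub, Polynomial.eval_mul, Polynomial.eval_add,
      Polynomial.eval_C, Polynomial.eval_X]
    ring
  have hqeval : ∀ n : ℤ, ℓ ≤ n → PP.det.eval (n : ℝ) = (G (n : ℝ) * H (n : ℝ)).det := by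
    intro n _
    have h := (Polynomial.evalRingHom ((n : ℤ) : ℝ)).map_det PP
    rw [hPPeval] at h
    simpa using h
  have hq0 : ∀ n : ℤ, ℓ ≤ n → PP.det.eval (n : ℝ) ≠ 0 := by
    intro n hn
    rw [hqeval n hn, Matrix.det_mul]
    exact mul_ne_zero (hGdet n hn) (hdet n hn)
  -- conclusion
  refine ⟨fun i => (PP.adjugate *ᵥ ZP) i, PP.det, hq0, ?_⟩
  intro n hn i
  rw [eq_div_iff (hq0 n hn)]
  have hadj : ((Polynomial.evalRingHom ((n : ℤ) : ℝ)).mapMatrix PP.adjugate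
      : Matrix (Fin k) (Fin k) ℝ) = (G (n : ℝ) * H (n : ℝ)).adjugate := by
    rw [(Polynomial.evalRingHom ((n : ℤ) : ℝ)).map_adjugate, hPPeval]
  have hmv : ((PP.adjugate *ᵥ ZP) i).eval (n : ℝ)
      = (((G (n : ℝ) * H (n : ℝ)).adjugate) *ᵥ z n) i := by
    rw [← hadj]
    simp only [Matrix.mulVec, dotProduct, Polynomial.eval_finset_sum,
      Polynomial.eval_mul, RingHom.mapMatrix_apply, Matrix.map_apply,
      Polynomial.coe_evalRingHom]
    exact Finset.sum_congr rfl fun j _ => by rw [hZPeval n hn j]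
  rw [hmv, hz, Matrix.mulVec_mulVec, Matrix.adjugate_mul]
  simp only [Matrix.smul_mulVec, Matrix.one_mulVec, Pi.smul_apply, smul_eq_mul]
  rw [hqeval n hn, mul_comm]

end
end

section
/- Let M, B, Λ ∈ M₂(ℝ) with M symmetric, invertible, and not a scalar multiple of the identity. Suppose BM and ΛM are symmetric (BM = (BM)ᵀ and ΛM = (ΛM)ᵀ) and that B and Λ do not commute ([B,Λ] = BΛ − ΛB ≠ 0). Then there exists a real constant β such that M = β·[B,Λ]·J, where J = [[0,1],[−1,0]]. -/
/-!
Transposing `B Λ M` moves `M` through `B` and `Λ` using the symmetry of `B M` and `Λ M`, which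
swaps the two factors; hence `[B, Λ] M` is skew-symmetric, i.e. `[B, Λ] M = a J` for a scalar `a`,
and `a ≠ 0` because `M` is invertible and `[B, Λ] ≠ 0`. A commutator is traceless, so by
Cayley–Hamilton `[B, Λ]² = -det [B, Λ] • 1`; multiplying `[B, Λ] M = a J` on the left by `[B, Λ]`
gives `det [B, Λ] • M = -a [B, Λ] J`, and `det [B, Λ] ≠ 0` since `det [B, Λ] · det M = a²`.
-/

open Matrix

section Symmetric

variable {n R : Type*} [Fintype n] [CommRing R] {M B Λ : Matrix n n R}

theorem transpose_mul_mul_eq_swap (hM : Mᵀ = M) (hBM : (B * M)ᵀ = B * M)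
    (hΛM : (Λ * M)ᵀ = Λ * M) : (B * Λ * M)ᵀ = Λ * B * M := by
  have hMB : M * Bᵀ = B * M := by rw [← hBM, transpose_mul, hM]
  rw [mul_assoc, transpose_mul, hΛM, mul_assoc, hMB, mul_assoc]

theorem transpose_commutator_mul_eq_neg (hM : Mᵀ = M) (hBM : (B * M)ᵀ = B * M)
    (hΛM : (Λ * M)ᵀ = Λ * M) : ((B * Λ - Λ * B) * M)ᵀ = -((B * Λ - Λ * B) * M) := by
  rw [sub_mul, transpose_sub, transpose_mul_mul_eq_swap hM hBM hΛM,
    transpose_mul_mul_eq_swap hM hΛM hBM, neg_sub]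

end Symmetric

section FinTwo

variable {R : Type*} [CommRing R]

theorem eq_smul_of_transpose_eq_neg [IsAddTorsionFree R] {X : Matrix (Fin 2) (Fin 2) R}
    (hX : Xᵀ = -X) : X = X 0 1 • !![0, 1; -1, 0] := by
  have hX00 : X 0 0 = 0 := self_eq_neg.mp (congrFun (congrFun hX 0) 0)
  have hX11 : X 1 1 = 0 := self_eq_neg.mp (congrFun (congrFun hX 1) 1)
  have hX10 : X 1 0 = -X 0 1 := congrFun (congrFun hX 0) 1
  ext i j
  fin_cases i <;> fin_cases j <;> simp [hX00, hX11, hX10]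

theorem adjugate_eq_neg_of_trace_eq_zero {C : Matrix (Fin 2) (Fin 2) R} (hC : C.trace = 0) :
    C.adjugate = -C := by
  have hC11 : C 1 1 = -C 0 0 := eq_neg_of_add_eq_zero_right (by rwa [← trace_fin_two])
  rw [adjugate_fin_two]
  ext i j
  fin_cases i <;> fin_cases j <;> simp [hC11]

theorem det_smul_eq_neg_mul_mul_of_trace_eq_zero {C : Matrix (Fin 2) (Fin 2) R}
    (hC : C.trace = 0) (M : Matrix (Fin 2) (Fin 2) R) : C.det • M = -(C * (C * M)) := by
  rw [← one_mul M, ← smul_mul_assoc, ← adjugate_mul, adjugate_eq_neg_of_trace_eq_zero hC,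
    one_mul, neg_mul, neg_mul, mul_assoc]

end FinTwo

theorem M_from_commutator_general
    (M B Λ : Matrix (Fin 2) (Fin 2) ℝ)
    (hMsym : Mᵀ = M) (hMinv : IsUnit M)
    (hBM : (B * M)ᵀ = B * M) (hΛM : (Λ * M)ᵀ = Λ * M)
    (hcomm : B * Λ - Λ * B ≠ 0) :
    ∃ β : ℝ, M = β • ((B * Λ - Λ * B) * !![0, 1; -1, 0]) := by
  set C := B * Λ - Λ * B
  set a := (C * M) 0 1
  have hCM : C * M = a • !![0, 1; -1, 0] :=
    eq_smul_of_transpose_eq_neg (transpose_commutator_mul_eq_neg hMsym hBM hΛM)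
  have hC : C.trace = 0 := by rw [trace_sub, trace_mul_comm, sub_self]
  have ha : a ≠ 0 := by
    rintro ha
    rw [ha, zero_smul, hMinv.mul_left_eq_zero] at hCM
    exact hcomm hCM
  have hdet : C.det * M.det = a ^ 2 := by
    rw [← det_mul, hCM, det_smul, det_fin_two_of]
    norm_num
  have hdetC : C.det ≠ 0 := left_ne_zero_of_mul (hdet ▸ pow_ne_zero 2 ha)
  refine ⟨-a / C.det, ?_⟩
  calc M = C.det⁻¹ • (C.det • M) := by rw [smul_smul, inv_mul_cancel₀ hdetC, one_smul]
    _ = C.det⁻¹ • -(C * (a • !![0, 1; -1, 0])) := by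
      rw [det_smul_eq_neg_mul_mul_of_trace_eq_zero hC, hCM]
    _ = (-a / C.det) • (C * !![0, 1; -1, 0]) := by
      rw [Matrix.mul_smul, smul_neg, ← neg_smul, smul_smul, neg_mul_comm, div_eq_inv_mul]

/-- If M is symmetric, invertible, and not scalar, BM and ΛM are symmetric, and
B and Λ do not commute, then M = β[B,Λ]J for some real β. -/
theorem M_from_commutator
    (M B Λ : Matrix (Fin 2) (Fin 2) ℝ)
    (hMsym : Mᵀ = M) (hMinv : IsUnit M) (hMns : ∀ c : ℝ, M ≠ c • (1 : Matrix (Fin 2) (Fin 2) ℝ))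
    (hBM : (B * M)ᵀ = B * M) (hΛM : (Λ * M)ᵀ = Λ * M)
    (hcomm : B * Λ - Λ * B ≠ 0) :
    ∃ β : ℝ, M = β • ((B * Λ - Λ * B) * !![0, 1; -1, 0]) :=
  M_from_commutator_general M B Λ hMsym hMinv hBM hΛM hcomm
end

section
/- Fix n ≥ 1, and let B(j), Λ(j) ∈ M₂(ℝ) for j ∈ {n−1, n, n+1} be such that each commutator [B(j),Λ(j)] = B(j)Λ(j) − Λ(j)B(j) is invertible, and let β(n−1), β(n), β(n+1) be nonzero real numbers. Define M(j) = β(j)[B(j),Λ(j)]J for j ∈ {n−1,n,n+1} (J = [[0,1],[−1,0]]) and C(j+1) = (β(j+1)/β(j))·[B(j+1),Λ(j+1)]·[B(j),Λ(j)]⁻¹ for j ∈ {n−1,n}. Then the five matrices M(n), B(n)M(n), Λ(n)M(n), C(n)M(n), and C(n+1)M(n) are all symmetric. -/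
/-!
For a 2×2 matrix `A`, the product `A * J` is symmetric exactly when `A` is traceless, so every
claim reduces to the vanishing of a trace. Commutators `K = [X, Y]` are traceless, and so are
`X * K` and `Y * K` by cyclicity of the trace. The inverse of a traceless 2×2 matrix is a multiple
of its adjugate `-K'`, hence traceless, and a traceless `K` squares to the scalar `-det K`, so
`tr (K * K'⁻¹ * K) = -det K * tr K'⁻¹ = 0`. Finally `C (n + 1) * M n` collapses to a multiple
of `K (n + 1) * J` because `K n⁻¹ * K n = 1`.
-/

open Matrix

namespace Matrix

section Trace

variable {n R : Type*} [Fintype n] [CommRing R]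

theorem trace_commutator_eq_zero (X Y : Matrix n n R) : (X * Y - Y * X).trace = 0 := by
  rw [trace_sub, trace_mul_comm, sub_self]

theorem trace_mul_commutator_left_eq_zero (X Y : Matrix n n R) :
    (X * (X * Y - Y * X)).trace = 0 := by
  rw [mul_sub, trace_sub, trace_mul_comm X (X * Y), Matrix.mul_assoc, sub_self]

theorem trace_mul_commutator_right_eq_zero (X Y : Matrix n n R) :
    (Y * (X * Y - Y * X)).trace = 0 := by
  rw [mul_sub, trace_sub, ← Matrix.mul_assoc, ← Matrix.mul_assoc, trace_mul_cycle, sub_self]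

end Trace

section FinTwo

variable {R : Type*} [CommRing R]

theorem isSymm_mul_J_of_trace_eq_zero {A : Matrix (Fin 2) (Fin 2) R} (h : A.trace = 0) :
    (A * !![0, 1; -1, 0]).IsSymm := by
  rw [trace_fin_two] at h
  rw [IsSymm, eta_fin_two A]
  ext i j
  fin_cases i <;> fin_cases j <;> simp [eq_neg_of_add_eq_zero_left h]

theorem trace_inv_fin_two (A : Matrix (Fin 2) (Fin 2) R) :
    A⁻¹.trace = Ring.inverse A.det * A.trace := by
  rw [inv_def, trace_smul, adjugate_fin_two, trace_fin_two_of, trace_fin_two, add_comm, smul_eq_mul]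

theorem mul_self_fin_two_of_trace_eq_zero {K : Matrix (Fin 2) (Fin 2) R} (h : K.trace = 0) :
    K * K = -K.det • 1 := by
  rw [trace_fin_two] at h
  rw [eta_fin_two K, det_fin_two_of]
  ext i j
  fin_cases i <;> fin_cases j <;> simp [Matrix.mul_apply, eq_neg_of_add_eq_zero_left h] <;> ring

theorem trace_mul_inv_mul_self_eq_zero {K L : Matrix (Fin 2) (Fin 2) R}
    (hK : K.trace = 0) (hL : L.trace = 0) : (K * L⁻¹ * K).trace = 0 := by
  rw [trace_mul_comm, ← Matrix.mul_assoc, mul_self_fin_two_of_trace_eq_zero hK, smul_mul_assoc,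
    Matrix.one_mul, trace_smul, trace_inv_fin_two, hL, mul_zero, smul_zero]

end FinTwo

end Matrix

theorem auto_symmetry_general
    (n : ℕ) (hn : 1 ≤ n)
    (B Λ M C : ℕ → Matrix (Fin 2) (Fin 2) ℝ) (β : ℕ → ℝ)
    (hinv : ∀ j ∈ ({n - 1, n, n + 1} : Set ℕ), IsUnit (B j * Λ j - Λ j * B j))
    (hM : ∀ j ∈ ({n - 1, n, n + 1} : Set ℕ),
      M j = β j • ((B j * Λ j - Λ j * B j) * !![0, 1; -1, 0]))
    (hC : ∀ j ∈ ({n - 1, n} : Set ℕ),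
      C (j + 1) = (β (j + 1) / β j) •
        ((B (j + 1) * Λ (j + 1) - Λ (j + 1) * B (j + 1)) * (B j * Λ j - Λ j * B j)⁻¹)) :
    (M n)ᵀ = M n ∧ (B n * M n)ᵀ = B n * M n ∧ (Λ n * M n)ᵀ = Λ n * M n ∧
      (C n * M n)ᵀ = C n * M n ∧ (C (n + 1) * M n)ᵀ = C (n + 1) * M n := by
  set K : ℕ → Matrix (Fin 2) (Fin 2) ℝ := fun j ↦ B j * Λ j - Λ j * B j
  have hMn : M n = β n • (K n * !![0, 1; -1, 0]) := hM n (by simp)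
  have hCn : C n = (β n / β (n - 1)) • (K n * (K (n - 1))⁻¹) := by
    simpa [Nat.sub_add_cancel hn] using hC (n - 1) (by simp)
  have hCn1 : C (n + 1) = (β (n + 1) / β n) • (K (n + 1) * (K n)⁻¹) := hC n (by simp)
  have hKn : (K n)⁻¹ * K n = 1 :=
    nonsing_inv_mul _ ((isUnit_iff_isUnit_det _).mp (hinv n (by simp)))
  refine ⟨?_, ?_, ?_, ?_, ?_⟩
  · rw [hMn]
    exact (isSymm_mul_J_of_trace_eq_zero (trace_commutator_eq_zero _ _)).smul _
  · rw [hMn, mul_smul_comm, ← Matrix.mul_assoc]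
    exact (isSymm_mul_J_of_trace_eq_zero (trace_mul_commutator_left_eq_zero _ _)).smul _
  · rw [hMn, mul_smul_comm, ← Matrix.mul_assoc]
    exact (isSymm_mul_J_of_trace_eq_zero (trace_mul_commutator_right_eq_zero _ _)).smul _
  · rw [hMn, hCn, smul_mul_smul_comm, ← Matrix.mul_assoc]
    exact (isSymm_mul_J_of_trace_eq_zero (trace_mul_inv_mul_self_eq_zero
      (trace_commutator_eq_zero _ _) (trace_commutator_eq_zero _ _))).smul _
  · rw [hMn, hCn1, smul_mul_smul_comm, Matrix.mul_assoc, ← Matrix.mul_assoc _ (K n), hKn,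
      Matrix.one_mul]
    exact (isSymm_mul_J_of_trace_eq_zero (trace_commutator_eq_zero _ _)).smul _

/-- If M(j) = β(j)[B(j),Λ(j)]J and C(j+1) = (β(j+1)/β(j))[B(j+1),Λ(j+1)][B(j),Λ(j)]⁻¹,
then M(n), B(n)M(n), Λ(n)M(n), C(n)M(n), and C(n+1)M(n) are all symmetric. -/
theorem auto_symmetry
    (n : ℕ) (hn : 1 ≤ n)
    (B Λ M C : ℕ → Matrix (Fin 2) (Fin 2) ℝ) (β : ℕ → ℝ)
    (hinv : ∀ j ∈ ({n - 1, n, n + 1} : Set ℕ), IsUnit (B j * Λ j - Λ j * B j))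
    (hβ : ∀ j ∈ ({n - 1, n, n + 1} : Set ℕ), β j ≠ 0)
    (hM : ∀ j ∈ ({n - 1, n, n + 1} : Set ℕ),
      M j = β j • ((B j * Λ j - Λ j * B j) * !![0, 1; -1, 0]))
    (hC : ∀ j ∈ ({n - 1, n} : Set ℕ),
      C (j + 1) = (β (j + 1) / β j) •
        ((B (j + 1) * Λ (j + 1) - Λ (j + 1) * B (j + 1)) * (B j * Λ j - Λ j * B j)⁻¹)) :
    (M n)ᵀ = M n ∧ (B n * M n)ᵀ = B n * M n ∧ (Λ n * M n)ᵀ = Λ n * M n ∧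
      (C n * M n)ᵀ = C n * M n ∧ (C (n + 1) * M n)ᵀ = C (n + 1) * M n :=
  auto_symmetry_general n hn B Λ M C β hinv hM hC
end

section
/- Let A, B, C ∈ M₂(ℝ), S(x) = Ax + B, let T : ℝ → M₂(ℝ) be a matrix polynomial function and F ∈ M₂(ℝ). Define the right-acting operators 𝔘 : Ψ ↦ Ψ'S + ΨC and 𝔙 : Φ ↦ Φ'T + ΦF. Fix n ≥ 0, suppose An + C is invertible, and let Ψ be a monic 2×2 matrix polynomial of degree n such that (Ψ·𝔘)·𝔙 = Λ̃Ψ for some constant matrix Λ̃ ∈ M₂(ℝ). Then P := (An+C)⁻¹·(Ψ·𝔘) is a monic matrix polynomial of degree n and satisfies (P·𝔙)·𝔘 = Λ(n)P, where Λ(n) = (An+C)⁻¹Λ̃(An+C). -/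
/-!
Constant matrices acting on the left commute with right-acting differential operators, so
`P·𝔙 = K⁻¹((Ψ·𝔘)·𝔙) = K⁻¹Λ̃Ψ` with `K = An + C`, and then `(P·𝔙)·𝔘 = K⁻¹Λ̃(Ψ·𝔘) = K⁻¹Λ̃K·P`.
Monicity: `Ψ ↦ Ψ'(xA + B) + ΨC` keeps the degree `≤ n` and multiplies the `xⁿ`-coefficient
by `nA + C = K` on the right.
-/

open Matrix

noncomputable section

/-- `P` is a monic 2×2 matrix polynomial of degree `n`. -/
def IsMonicMatPoly (P : ℝ → Mat2) (n : ℕ) : Prop :=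
  ∃ A : ℕ → Mat2, A n = 1 ∧ ∀ x, P x = ∑ i ∈ Finset.range (n + 1), x ^ i • A i

open Finset

def HasTopCoeff (P : ℝ → Mat2) (n : ℕ) (L : Mat2) : Prop :=
  ∃ M : ℕ → Mat2, M n = L ∧ ∀ x, P x = ∑ k ∈ range (n + 1), x ^ k • M k

/-- `Ψ·(∂ₓS + C)` in right-action notation. -/
def firstOrderOp (S : ℝ → Mat2) (C : Mat2) (P : ℝ → Mat2) (x : ℝ) : Mat2 :=
  mDeriv P x * S x + P x * C

lemma isMonicMatPoly_iff_hasTopCoeff {P : ℝ → Mat2} {n : ℕ} :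
    IsMonicMatPoly P n ↔ HasTopCoeff P n 1 :=
  Iff.rfl

section PowSum

variable (M : ℕ → Mat2) (m : ℕ)

lemma sum_pow_smul_apply (i j : Fin 2) :
    (fun t : ℝ => (∑ k ∈ range m, t ^ k • M k) i j) = fun t => ∑ k ∈ range m, t ^ k * M k i j := by
  funext t
  simp only [Matrix.sum_apply, Matrix.smul_apply, smul_eq_mul]

lemma differentiableAt_sum_pow_smul_apply (i j : Fin 2) (x : ℝ) :
    DifferentiableAt ℝ (fun t => (∑ k ∈ range m, t ^ k • M k) i j) x := by
  rw [sum_pow_smul_apply]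
  exact DifferentiableAt.fun_sum fun k _ => (differentiableAt_pow k).mul_const _

lemma mDeriv_sum_pow_smul (x : ℝ) :
    mDeriv (fun t => ∑ k ∈ range m, t ^ k • M k) x
      = ∑ k ∈ range m, ((k : ℝ) * x ^ (k - 1)) • M k := by
  ext i j
  simp only [mDeriv, of_apply]
  rw [sum_pow_smul_apply, deriv_fun_sum fun k _ => (differentiableAt_pow k).mul_const _]
  simp [Matrix.sum_apply]

end PowSum

lemma mDeriv_const_mul (K : Mat2) (Q : ℝ → Mat2) (x : ℝ)
    (hQ : ∀ i j, DifferentiableAt ℝ (fun t => Q t i j) x) :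
    mDeriv (fun t => K * Q t) x = K * mDeriv Q x := by
  ext i j
  simp only [mDeriv, of_apply, Matrix.mul_apply]
  rw [deriv_fun_sum fun k _ => (hQ k j).const_mul (K i k)]
  exact sum_congr rfl fun k _ => deriv_const_mul _ (hQ k j)

lemma firstOrderOp_const_mul (S : ℝ → Mat2) (C K : Mat2) (Q : ℝ → Mat2) (x : ℝ)
    (hQ : ∀ i j, DifferentiableAt ℝ (fun t => Q t i j) x) :
    firstOrderOp S C (fun t => K * Q t) x = K * firstOrderOp S C Q x := by
  simp only [firstOrderOp, mDeriv_const_mul K Q x hQ, Matrix.mul_add, Matrix.mul_assoc]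

lemma sum_range_mul_pow_pred_smul_eq_shift {E : Type*} [AddCommGroup E] [Module ℝ E]
    (Q : ℕ → E) (m : ℕ) (hQ : Q m = 0) (x : ℝ) :
    ∑ k ∈ range m, ((k : ℝ) * x ^ (k - 1)) • Q k
      = ∑ k ∈ range m, x ^ k • (((k + 1 : ℕ) : ℝ) • Q (k + 1)) := by
  cases m with
  | zero => simp
  | succ m =>
    rw [sum_range_succ', sum_range_succ, hQ]
    simp only [Nat.cast_zero, zero_mul, zero_smul, smul_zero, add_zero, Nat.add_sub_cancel]
    exact sum_congr rfl fun k _ => by rw [smul_smul, mul_comm]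

lemma firstOrderOp_linear_sum_pow_smul (A B C : Mat2) (M : ℕ → Mat2) (m : ℕ) (hM : M m = 0)
    (x : ℝ) :
    firstOrderOp (fun t => t • A + B) C (fun t => ∑ k ∈ range m, t ^ k • M k) x
      = ∑ k ∈ range m,
          x ^ k • ((k : ℝ) • (M k * A) + ((k + 1 : ℕ) : ℝ) • (M (k + 1) * B) + M k * C) := by
  have hA : ∀ k : ℕ, ((k : ℝ) * x ^ (k - 1)) • M k * (x • A) = x ^ k • ((k : ℝ) • (M k * A)) := by
    intro k
    rw [smul_mul_assoc, mul_smul_comm, smul_smul, smul_smul]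
    cases k with
    | zero => simp
    | succ k => rw [Nat.add_sub_cancel, pow_succ]; ring_nf
  have hB := sum_range_mul_pow_pred_smul_eq_shift (fun k => M k * B) m (by simp [hM]) x
  simp only [firstOrderOp, mDeriv_sum_pow_smul, sum_mul, mul_add, sum_add_distrib, hA,
    smul_mul_assoc, hB, smul_add]

lemma HasTopCoeff.exists_coeff_succ_eq_zero {P : ℝ → Mat2} {n : ℕ} {L : Mat2}
    (h : HasTopCoeff P n L) :
    ∃ M : ℕ → Mat2, M n = L ∧ M (n + 1) = 0 ∧ P = fun x => ∑ k ∈ range (n + 1), x ^ k • M k := by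
  obtain ⟨M, hMn, hP⟩ := h
  refine ⟨fun k => if k ≤ n then M k else 0, by simp [hMn], by simp, funext fun x => ?_⟩
  rw [hP]
  exact sum_congr rfl fun k hk => by simp [Nat.lt_succ_iff.mp (mem_range.mp hk)]

lemma HasTopCoeff.differentiableAt_apply {P : ℝ → Mat2} {n : ℕ} {L : Mat2}
    (h : HasTopCoeff P n L) (x : ℝ) (i j : Fin 2) :
    DifferentiableAt ℝ (fun t => P t i j) x := by
  obtain ⟨M, -, -, rfl⟩ := h.exists_coeff_succ_eq_zero
  exact differentiableAt_sum_pow_smul_apply M (n + 1) i j x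

lemma HasTopCoeff.const_mul {P : ℝ → Mat2} {n : ℕ} {L : Mat2} (h : HasTopCoeff P n L)
    (K : Mat2) : HasTopCoeff (fun x => K * P x) n (K * L) := by
  obtain ⟨M, hMn, hP⟩ := h
  exact ⟨fun k => K * M k, congrArg (K * ·) hMn, fun x => by simp only [hP, mul_sum, mul_smul_comm]⟩

lemma HasTopCoeff.firstOrderOp_linear {P : ℝ → Mat2} {n : ℕ} {L : Mat2}
    (h : HasTopCoeff P n L) (A B C : Mat2) :
    HasTopCoeff (firstOrderOp (fun t => t • A + B) C P) n (L * ((n : ℝ) • A + C)) := by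
  obtain ⟨M, hMn, hM, rfl⟩ := h.exists_coeff_succ_eq_zero
  refine ⟨_, ?_, firstOrderOp_linear_sum_pow_smul A B C M (n + 1) hM⟩
  simp [hMn, hM, Matrix.mul_add]

theorem darboux_eigenfunction_general
    (A B C F : Mat2) (T : ℝ → Mat2)
    (S : ℝ → Mat2) (hS : ∀ x, S x = x • A + B)
    (opU : (ℝ → Mat2) → (ℝ → Mat2))
    (hopU : ∀ P x, opU P x = mDeriv P x * S x + P x * C)
    (opV : (ℝ → Mat2) → (ℝ → Mat2))
    (hopV : ∀ P x, opV P x = mDeriv P x * T x + P x * F)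
    (n : ℕ) (hinv : IsUnit ((n : ℝ) • A + C))
    (Ψ : ℝ → Mat2) (hΨ : IsMonicMatPoly Ψ n)
    (Λt : Mat2)
    (heig : ∀ x, opV (opU Ψ) x = Λt * Ψ x) :
    let P : ℝ → Mat2 := fun x => ((n : ℝ) • A + C)⁻¹ * opU Ψ x
    IsMonicMatPoly P n ∧
      ∀ x, opU (opV P) x =
        (((n : ℝ) • A + C)⁻¹ * Λt * ((n : ℝ) • A + C)) * P x := by
  intro P
  obtain rfl : opU = firstOrderOp S C := funext fun Q => funext (hopU Q)
  obtain rfl : opV = firstOrderOp T F := funext fun Q => funext (hopV Q)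
  obtain rfl : S = fun x => x • A + B := funext hS
  rw [isMonicMatPoly_iff_hasTopCoeff] at hΨ ⊢
  set K := (n : ℝ) • A + C
  have hKdet : IsUnit K.det := (isUnit_iff_isUnit_det K).mp hinv
  have hUΨ : HasTopCoeff (firstOrderOp (fun t => t • A + B) C Ψ) n K := by
    simpa only [Matrix.one_mul] using HasTopCoeff.firstOrderOp_linear hΨ A B C
  have hVP : firstOrderOp T F P = fun x => (K⁻¹ * Λt) * Ψ x := funext fun x => by
    rw [firstOrderOp_const_mul _ _ _ _ x (hUΨ.differentiableAt_apply x), heig, Matrix.mul_assoc]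
  refine ⟨by simpa only [nonsing_inv_mul K hKdet] using hUΨ.const_mul K⁻¹, fun x => ?_⟩
  rw [hVP, firstOrderOp_const_mul _ _ _ _ x (hΨ.differentiableAt_apply x),
    Matrix.mul_assoc _ K, mul_nonsing_inv_cancel_left K _ hKdet]

/-- Darboux transformation of eigenfunctions: if (Ψ·𝔘)·𝔙 = Λ̃Ψ, then
P = (An+C)⁻¹(Ψ·𝔘) is monic of degree n and (P·𝔙)·𝔘 = (An+C)⁻¹Λ̃(An+C)·P. -/
theorem darboux_eigenfunction
    (A B C F : Mat2) (T : ℝ → Mat2) (hT : IsMatPoly T)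
    (S : ℝ → Mat2) (hS : ∀ x, S x = x • A + B)
    (opU : (ℝ → Mat2) → (ℝ → Mat2))
    (hopU : ∀ P x, opU P x = mDeriv P x * S x + P x * C)
    (opV : (ℝ → Mat2) → (ℝ → Mat2))
    (hopV : ∀ P x, opV P x = mDeriv P x * T x + P x * F)
    (n : ℕ) (hinv : IsUnit ((n : ℝ) • A + C))
    (Ψ : ℝ → Mat2) (hΨ : IsMonicMatPoly Ψ n)
    (Λt : Mat2)
    (heig : ∀ x, opV (opU Ψ) x = Λt * Ψ x) :
    let P : ℝ → Mat2 := fun x => ((n : ℝ) • A + C)⁻¹ * opU Ψ x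
    IsMonicMatPoly P n ∧
      ∀ x, opU (opV P) x =
        (((n : ℝ) • A + C)⁻¹ * Λt * ((n : ℝ) • A + C)) * P x :=
  darboux_eigenfunction_general A B C F T S hS opU hopU opV hopV n hinv Ψ hΨ Λt heig
end
end
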